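/- Lemma 2, 'if' direction: in the latent-variable LiNGAM model, if x_j has no child observed variable and no latent confounder, then the residual r_j^{(−j)} of regressing x_j on all other variables x_{(−j)} equals e_j and is independent of x_{(−j)}. -/

import Mathlib

open MeasureTheory ProbabilityTheory Matrix

/-! Substituting `x_j = wᵀ x₋ⱼ + e_j` into the cross moment gives `σ = Σ w + E[x₋ⱼ e_j]`, and the
last term vanishes because `e_j` is centred and independent of `x₋ⱼ`. Hence the regression
coefficient `Σ⁻¹ σ` is exactly `w`, so the residual is `e_j` itself. -/

noncomputable section Moments

variable {Ω ι : Type*} [MeasurableSpace Ω] {μ : Measure Ω}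

def secondMomentMatrix (μ : Measure Ω) (X : Ω → ι → ℝ) : Matrix ι ι ℝ :=
  Matrix.of fun i k => ∫ ω, X ω i * X ω k ∂μ

def crossMoment (μ : Measure Ω) (X : Ω → ι → ℝ) (Y : Ω → ℝ) : ι → ℝ :=
  fun i => ∫ ω, X ω i * Y ω ∂μ

def regressionCoeff [Fintype ι] [DecidableEq ι] (μ : Measure Ω) (X : Ω → ι → ℝ) (Y : Ω → ℝ) :
    ι → ℝ :=
  crossMoment μ X Y ᵥ* (secondMomentMatrix μ X)⁻¹

lemma secondMomentMatrix_transpose (X : Ω → ι → ℝ) :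
    (secondMomentMatrix μ X)ᵀ = secondMomentMatrix μ X := by
  ext i k
  simp only [secondMomentMatrix, transpose_apply, of_apply, mul_comm]

lemma crossMoment_eq_zero_of_indepFun {X : Ω → ι → ℝ} {Y : Ω → ℝ} (hXY : IndepFun X Y μ)
    (hX : ∀ i, AEStronglyMeasurable (fun ω => X ω i) μ) (hY : AEStronglyMeasurable Y μ)
    (hY0 : ∫ ω, Y ω ∂μ = 0) :
    crossMoment μ X Y = 0 := by
  funext i
  have hindep : IndepFun (fun ω => X ω i) Y μ := hXY.comp (measurable_pi_apply i) measurable_id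
  simpa [crossMoment, hY0] using hindep.integral_mul_eq_mul_integral (hX i) hY

variable [Fintype ι]

lemma crossMoment_linear_add {X : Ω → ι → ℝ} {Y : Ω → ℝ} (hX : ∀ i, MemLp (fun ω => X ω i) 2 μ)
    (hY : MemLp Y 2 μ) (w : ι → ℝ) :
    crossMoment μ X (fun ω => ∑ k, w k * X ω k + Y ω) =
      w ᵥ* secondMomentMatrix μ X + crossMoment μ X Y := by
  funext i
  have hXX : ∀ k, Integrable (fun ω => w k * (X ω i * X ω k)) μ := fun k =>
    ((hX i).integrable_mul (hX k)).const_mul (w k)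
  have hXY : Integrable (fun ω => X ω i * Y ω) μ := (hX i).integrable_mul hY
  calc crossMoment μ X (fun ω => ∑ k, w k * X ω k + Y ω) i
      = ∫ ω, ((∑ k, w k * (X ω i * X ω k)) + X ω i * Y ω) ∂μ := by
        simp only [crossMoment, mul_add, Finset.mul_sum, mul_left_comm]
    _ = ∑ k, w k * ∫ ω, X ω i * X ω k ∂μ + ∫ ω, X ω i * Y ω ∂μ := by
        rw [integral_add (integrable_finsetSum _ fun k _ => hXX k) hXY,
          integral_finsetSum _ fun k _ => hXX k]
        simp only [integral_const_mul]
    _ = (w ᵥ* secondMomentMatrix μ X + crossMoment μ X Y) i := by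
        rw [← secondMomentMatrix_transpose, vecMul_transpose]
        simp [mulVec, dotProduct, secondMomentMatrix, crossMoment, mul_comm]

lemma regressionCoeff_linear_add [DecidableEq ι] {X : Ω → ι → ℝ} {Y : Ω → ℝ}
    (hX : ∀ i, MemLp (fun ω => X ω i) 2 μ) (hY : MemLp Y 2 μ)
    (hS : IsUnit (secondMomentMatrix μ X).det) (hXY : crossMoment μ X Y = 0) (w : ι → ℝ) :
    regressionCoeff μ X (fun ω => ∑ k, w k * X ω k + Y ω) = w := by
  rw [regressionCoeff, crossMoment_linear_add hX hY, hXY, add_zero, vecMul_vecMul,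
    mul_nonsing_inv _ hS, vecMul_one]

end Moments

theorem lemma2_if_sink_general {Ω : Type*} [MeasurableSpace Ω]
    (μ : Measure Ω) {d : ℕ}
    (xv : Ω → Fin d → ℝ) (e : Ω → ℝ) (w : Fin d → ℝ)
    (hxv2 : ∀ i, MemLp (fun ω => xv ω i) 2 μ) (he2 : MemLp e 2 μ)
    (hemean : ∫ ω, e ω ∂μ = 0)
    (hindep : IndepFun xv e μ)
    (xj : Ω → ℝ) (hxj : xj = fun ω => (∑ i, w i * xv ω i) + e ω)
    (σv : Fin d → ℝ) (hσv : σv = fun i => ∫ ω, xv ω i * xj ω ∂μ)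
    (Sg : Matrix (Fin d) (Fin d) ℝ)
    (hSg : Sg = Matrix.of fun i k => ∫ ω, xv ω i * xv ω k ∂μ)
    (hSginv : IsUnit Sg.det)
    (r : Ω → ℝ)
    (hr : r = fun ω => xj ω - ∑ i, Matrix.vecMul σv Sg⁻¹ i * xv ω i) :
    r = e ∧ IndepFun xv r μ := by
  subst hσv hSg hxj
  have hcoef : regressionCoeff μ xv (fun ω => ∑ k, w k * xv ω k + e ω) = w :=
    regressionCoeff_linear_add hxv2 he2 hSginv
      (crossMoment_eq_zero_of_indepFun hindep (fun i => (hxv2 i).aestronglyMeasurable)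
        he2.aestronglyMeasurable hemean) w
  have hre : r = e := by
    rw [hr]
    funext ω
    change _ - ∑ i, regressionCoeff μ xv (fun ω => ∑ k, w k * xv ω k + e ω) i * xv ω i = e ω
    rw [hcoef, add_sub_cancel_left]
  exact ⟨hre, hre ▸ hindep⟩

/-- Lemma 2, 'if' direction: if `x_j` is a sink with no latent confounder, i.e.
`x_j = wᵀ x₋ⱼ + e_j` with `e_j` zero-mean independent of the vector `x₋ⱼ`, and
the covariance matrix of `x₋ⱼ` is invertible, then the population regression
residual `r = x_j − σᵀ Σ₋ⱼ⁻¹ x₋ⱼ` equals `e_j` and is independent of `x₋ⱼ`. -/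
theorem lemma2_if_sink {Ω : Type*} [MeasurableSpace Ω]
    (μ : Measure Ω) [IsProbabilityMeasure μ] {d : ℕ}
    (xv : Ω → Fin d → ℝ) (e : Ω → ℝ) (w : Fin d → ℝ)
    (hxvmeas : Measurable xv) (hemeas : Measurable e)
    (hxv2 : ∀ i, MemLp (fun ω => xv ω i) 2 μ) (he2 : MemLp e 2 μ)
    (hxvmean : ∀ i, ∫ ω, xv ω i ∂μ = 0) (hemean : ∫ ω, e ω ∂μ = 0)
    (hindep : IndepFun xv e μ)
    (xj : Ω → ℝ) (hxj : xj = fun ω => (∑ i, w i * xv ω i) + e ω)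
    (σv : Fin d → ℝ) (hσv : σv = fun i => ∫ ω, xv ω i * xj ω ∂μ)
    (Sg : Matrix (Fin d) (Fin d) ℝ)
    (hSg : Sg = Matrix.of fun i k => ∫ ω, xv ω i * xv ω k ∂μ)
    (hSginv : IsUnit Sg.det)
    (r : Ω → ℝ)
    (hr : r = fun ω => xj ω - ∑ i, Matrix.vecMul σv Sg⁻¹ i * xv ω i) :
    r = e ∧ IndepFun xv r μ :=
  lemma2_if_sink_general μ xv e w hxv2 he2 hemean hindep xj hxj σv hσv Sg hSg hSginv r hr
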